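/- (Proposition 1.) The value function of the reward-augmented process equals the safety probability: E[ Σ_{k=0}^∞ r(S_k) ] = P( X_k ∈ C for all k ∈ {0, …, N} ), where for each sample path ω the augmented trajectory S_k(ω) is built from the realized trajectory k ↦ X_k(ω). Moreover this common value lies in the interval [0, 1]. -/

import Mathlib

open scoped Classical

/-- A pair `(h, y)` is absorbing iff `h < 0` or `y ∉ C`. -/
def IsAbsorbing {𝒳 : Type*} (C : Set 𝒳) (s : ℝ × 𝒳) : Prop :=
  s.1 < 0 ∨ s.2 ∉ C

/-- Reward: `1` if `0 ≤ h < Δt` and `(h, y)` is not absorbing, else `0`. -/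
noncomputable def reward {𝒳 : Type*} (C : Set 𝒳) (Δt : ℝ) (s : ℝ × 𝒳) : ℝ :=
  if 0 ≤ s.1 ∧ s.1 < Δt ∧ ¬ IsAbsorbing C s then 1 else 0

/-- The augmented trajectory built from a realized trajectory `x`. -/
noncomputable def augTraj {𝒳 : Type*} (C : Set 𝒳) (Δt τ : ℝ) (x : ℕ → 𝒳) : ℕ → ℝ × 𝒳
  | 0 => (τ, x 0)
  | k + 1 =>
      if IsAbsorbing C (augTraj C Δt τ x k) then augTraj C Δt τ x k
      else ((augTraj C Δt τ x k).1 - Δt, x (k + 1))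

open MeasureTheory

/-!
Until it is absorbed, the augmented state at step `k` is `(τ - k Δt, x k)`, so it is still alive
at step `k` exactly when `k ≤ N` and `x 0, …, x k ∈ C`. The only step with `0 ≤ τ - k Δt < Δt`
is `k = N`, so along every path the total reward is the indicator of `{x k ∈ C for all k ≤ N}`,
whose expectation is the safety probability.
-/

section AugmentedTrajectory

variable {𝒳 : Type*} {C : Set 𝒳} {Δt τ : ℝ} {x : ℕ → 𝒳} {k : ℕ}

lemma augTraj_succ_of_isAbsorbing (h : IsAbsorbing C (augTraj C Δt τ x k)) :
    augTraj C Δt τ x (k + 1) = augTraj C Δt τ x k := by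
  rw [augTraj, if_pos h]

lemma augTraj_succ_of_not_isAbsorbing (h : ¬IsAbsorbing C (augTraj C Δt τ x k)) :
    augTraj C Δt τ x (k + 1) = ((augTraj C Δt τ x k).1 - Δt, x (k + 1)) := by
  rw [augTraj, if_neg h]

lemma augTraj_eq_of_forall_lt (h : ∀ j < k, ¬IsAbsorbing C (τ - j * Δt, x j)) :
    augTraj C Δt τ x k = (τ - k * Δt, x k) := by
  induction k with
  | zero => simp [augTraj]
  | succ k ih =>
    have hk := ih fun j hj => h j (hj.trans k.lt_succ_self)
    rw [augTraj_succ_of_not_isAbsorbing (hk ▸ h k k.lt_succ_self), hk]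
    push_cast
    ring_nf

lemma not_isAbsorbing_augTraj_iff :
    ¬IsAbsorbing C (augTraj C Δt τ x k) ↔ ∀ j ≤ k, ¬IsAbsorbing C (τ - j * Δt, x j) := by
  induction k with
  | zero => simp [augTraj]
  | succ k ih =>
    simp only [Nat.le_succ_iff, or_imp, forall_and, forall_eq]
    by_cases hk : IsAbsorbing C (augTraj C Δt τ x k)
    · rw [augTraj_succ_of_isAbsorbing hk]
      tauto
    · rw [augTraj_eq_of_forall_lt fun j hj => ih.mp hk j (Nat.lt_succ_iff.mp hj)]
      tauto

lemma augTraj_of_not_isAbsorbing (h : ¬IsAbsorbing C (augTraj C Δt τ x k)) :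
    augTraj C Δt τ x k = (τ - k * Δt, x k) :=
  augTraj_eq_of_forall_lt fun j hj => not_isAbsorbing_augTraj_iff.mp h j hj.le

end AugmentedTrajectory

section FloorDiv

variable {K : Type*} [Field K] [LinearOrder K] [IsStrictOrderedRing K] [FloorSemiring K]
  {a b : K} {n : ℕ}

lemma Nat.le_floor_div_iff_mul_le (hb : 0 < b) (ha : 0 ≤ a) : n ≤ ⌊a / b⌋₊ ↔ n * b ≤ a := by
  rw [Nat.le_floor_iff (div_nonneg ha hb.le), le_div_iff₀ hb]

lemma Nat.floor_div_eq_iff (hb : 0 < b) (ha : 0 ≤ a) :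
    ⌊a / b⌋₊ = n ↔ n * b ≤ a ∧ a < (n + 1) * b := by
  rw [Nat.floor_eq_iff (div_nonneg ha hb.le), le_div_iff₀ hb, div_lt_iff₀ hb]

end FloorDiv

section Reward

variable {𝒳 : Type*} {C : Set 𝒳} {Δt τ : ℝ} {x : ℕ → 𝒳} {k : ℕ}

lemma not_isAbsorbing_augTraj_iff_le_floor (hΔt : 0 < Δt) (hτ : 0 ≤ τ) :
    ¬IsAbsorbing C (augTraj C Δt τ x k) ↔ k ≤ ⌊τ / Δt⌋₊ ∧ ∀ j ≤ k, x j ∈ C := by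
  rw [not_isAbsorbing_augTraj_iff, Nat.le_floor_div_iff_mul_le hΔt hτ]
  simp only [IsAbsorbing, not_or, not_lt, not_not, sub_nonneg]
  constructor
  · intro h
    exact ⟨(h k le_rfl).1, fun j hj => (h j hj).2⟩
  · rintro ⟨hk, hx⟩ j hj
    exact ⟨le_trans (by gcongr) hk, hx j hj⟩

lemma reward_augTraj (hΔt : 0 < Δt) (hτ : 0 ≤ τ) :
    reward C Δt (augTraj C Δt τ x k) =
      if k = ⌊τ / Δt⌋₊ ∧ ∀ j ≤ k, x j ∈ C then 1 else 0 := by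
  refine if_congr ⟨?_, ?_⟩ rfl rfl
  · rintro ⟨h_nonneg, h_lt, h_alive⟩
    rw [augTraj_of_not_isAbsorbing h_alive] at h_nonneg h_lt
    refine ⟨((Nat.floor_div_eq_iff hΔt hτ).mpr ⟨?_, ?_⟩).symm,
      ((not_isAbsorbing_augTraj_iff_le_floor hΔt hτ).mp h_alive).2⟩
    · linarith
    · linarith
  · rintro ⟨rfl, hx⟩
    have h_alive := (not_isAbsorbing_augTraj_iff_le_floor hΔt hτ).mpr ⟨le_rfl, hx⟩
    obtain ⟨h_le, h_lt⟩ := (Nat.floor_div_eq_iff hΔt hτ).mp rfl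
    have h_eq := augTraj_of_not_isAbsorbing h_alive
    rw [h_eq] at h_alive ⊢
    exact ⟨by linarith, by linarith, h_alive⟩

lemma tsum_reward_augTraj (hΔt : 0 < Δt) (hτ : 0 ≤ τ) :
    ∑' k, reward C Δt (augTraj C Δt τ x k) = if ∀ j ≤ ⌊τ / Δt⌋₊, x j ∈ C then 1 else 0 := by
  simp_rw [reward_augTraj hΔt hτ, ite_and]
  exact tsum_ite_eq _ (fun k => if ∀ j ≤ k, x j ∈ C then (1 : ℝ) else 0)

end Reward

/-- Proposition 1: the expected total return of the augmented
process equals the safety probability `P(X k ∈ C for all k ∈ {0,…,N})`, and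
this common value lies in `[0, 1]`. -/
theorem stmt_4 {Ω : Type*} [MeasurableSpace Ω] (P : Measure Ω) [IsProbabilityMeasure P]
    {𝒳 : Type*} [MeasurableSpace 𝒳] (X : ℕ → Ω → 𝒳) (hX : ∀ k, Measurable (X k))
    (C : Set 𝒳) (hC : MeasurableSet C) (Δt τ : ℝ) (hΔt : 0 < Δt) (hτ : 0 ≤ τ) :
    (∫ ω, (∑' k : ℕ, reward C Δt (augTraj C Δt τ (fun n => X n ω) k)) ∂P =
      (P {ω | ∀ k ≤ ⌊τ / Δt⌋₊, X k ω ∈ C}).toReal) ∧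
    0 ≤ ∫ ω, (∑' k : ℕ, reward C Δt (augTraj C Δt τ (fun n => X n ω) k)) ∂P ∧
    ∫ ω, (∑' k : ℕ, reward C Δt (augTraj C Δt τ (fun n => X n ω) k)) ∂P ≤ 1 := by
  set safe : Set Ω := {ω | ∀ k ≤ ⌊τ / Δt⌋₊, X k ω ∈ C}
  have h_safe : MeasurableSet safe := by
    simp only [safe, Set.ofPred_forall]
    exact .iInter fun k => .iInter fun _ => hX k hC
  have h_integrand : (fun ω => ∑' k, reward C Δt (augTraj C Δt τ (fun n => X n ω) k)) =
      safe.indicator 1 := by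
    ext ω
    simp [tsum_reward_augTraj hΔt hτ, Set.indicator_apply, safe]
  have h_value :
      ∫ ω, (∑' k, reward C Δt (augTraj C Δt τ (fun n => X n ω) k)) ∂P = P.real safe := by
    rw [h_integrand, integral_indicator_one h_safe]
  exact ⟨h_value, h_value ▸ measureReal_nonneg, h_value ▸ measureReal_le_one⟩
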